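/- arXiv:2310.18174 — 2 statements merged into one kernel-verified Lean document; each statement's English description precedes it below -/
import Mathlib

section
/- Suppose β is invertible with inverse α₀ (so α₀ has components α₀_Y : G(T'(Y)) ⟶ T(G(Y)) with α₀_Y ∘ β_Y = id and β_Y ∘ α₀_Y = id). Define, for X in 𝒳: (β_!)_X := ε_{T'(F X)} ∘ F(β_{F X}) ∘ F(T(η_X)) : F(T(X)) ⟶ T'(F(X)); ((β_!)^op)_X := τ'_{F(Tℓ X)} ∘ T'ℓ((β_!)_{Tℓ X}) ∘ T'ℓ(F(θ_X)) : T'ℓ(F(X)) ⟶ F(Tℓ(X)); and for Y in 𝒳': (α₀^op)_Y := τ_{G(T'ℓ Y)} ∘ Tℓ((α₀)_{T'ℓ Y}) ∘ Tℓ(G(θ'_Y)) : Tℓ(G(Y)) ⟶ G(T'ℓ(Y)); ((α₀^op)_!)_X := ε_{T'ℓ(F X)} ∘ F((α₀^op)_{F X}) ∘ F(Tℓ(η_X)) : F(Tℓ(X)) ⟶ T'ℓ(F(X)). Then for every object X of 𝒳 the morphisms ((β_!)^op)_X and ((α₀^op)_!)_X are mutually inverse; in particular the double mate (β_!)^op :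 T'ℓ ∘ F ⟶ F ∘ Tℓ is a natural isomorphism. -/
open CategoryTheory

universe v₁ v₂ u₁ u₂

section

variable {C : Type u₁} [Category.{v₁} C] {D : Type u₂} [Category.{v₂} D]

/-- `(β_!)_X := ε_{T'(F X)} ∘ F(β_{F X}) ∘ F(T(η_X)) : F(T(X)) ⟶ T'(F(X))`,
the mate of `β : G ⋙ T ⟶ T' ⋙ G` along the adjunction `F ⊣ G`. -/
def betaShriek (F : C ⥤ D) (G : D ⥤ C) (adj : F ⊣ G) (T : C ⥤ C) (T' : D ⥤ D)
    (β : G ⋙ T ⟶ T' ⋙ G) (X : C) : F.obj (T.obj X) ⟶ T'.obj (F.obj X) :=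
  F.map (T.map (adj.unit.app X)) ≫ F.map (β.app (F.obj X)) ≫
    adj.counit.app (T'.obj (F.obj X))

/-- `((β_!)^op)_X := τ'_{F(Tℓ X)} ∘ T'ℓ((β_!)_{Tℓ X}) ∘ T'ℓ(F(θ_X)) :
T'ℓ(F(X)) ⟶ F(Tℓ(X))`, the mate of `β_!` along the adjunctions `Tℓ ⊣ T` and
`T'ℓ ⊣ T'`. -/
def betaShriekOp (F : C ⥤ D) (G : D ⥤ C) (adj : F ⊣ G) (T Tl : C ⥤ C) (T' Tl' : D ⥤ D)
    (adjT : Tl ⊣ T) (adjT' : Tl' ⊣ T')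
    (β : G ⋙ T ⟶ T' ⋙ G) (X : C) : Tl'.obj (F.obj X) ⟶ F.obj (Tl.obj X) :=
  Tl'.map (F.map (adjT.unit.app X)) ≫
    Tl'.map (betaShriek F G adj T T' β (Tl.obj X)) ≫
      adjT'.counit.app (F.obj (Tl.obj X))

/-- `(α₀^op)_Y := τ_{G(T'ℓ Y)} ∘ Tℓ((α₀)_{T'ℓ Y}) ∘ Tℓ(G(θ'_Y)) :
Tℓ(G(Y)) ⟶ G(T'ℓ(Y))`, the mate of `α₀ : T' ⋙ G ⟶ G ⋙ T` along the
adjunctions `Tℓ ⊣ T` and `T'ℓ ⊣ T'`. -/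
def alphaZeroOp (G : D ⥤ C) (T Tl : C ⥤ C) (T' Tl' : D ⥤ D)
    (adjT : Tl ⊣ T) (adjT' : Tl' ⊣ T')
    (α₀ : T' ⋙ G ⟶ G ⋙ T) (Y : D) : Tl.obj (G.obj Y) ⟶ G.obj (Tl'.obj Y) :=
  Tl.map (G.map (adjT'.unit.app Y)) ≫
    Tl.map (α₀.app (Tl'.obj Y)) ≫
      adjT.counit.app (G.obj (Tl'.obj Y))

/-- `((α₀^op)_!)_X := ε_{T'ℓ(F X)} ∘ F((α₀^op)_{F X}) ∘ F(Tℓ(η_X)) :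
F(Tℓ(X)) ⟶ T'ℓ(F(X))`, the mate of `α₀^op` along the adjunction `F ⊣ G`. -/
def alphaZeroOpShriek (F : C ⥤ D) (G : D ⥤ C) (adj : F ⊣ G) (T Tl : C ⥤ C) (T' Tl' : D ⥤ D)
    (adjT : Tl ⊣ T) (adjT' : Tl' ⊣ T')
    (α₀ : T' ⋙ G ⟶ G ⋙ T) (X : C) : F.obj (Tl.obj X) ⟶ Tl'.obj (F.obj X) :=
  F.map (Tl.map (adj.unit.app X)) ≫
    F.map (alphaZeroOp G T Tl T' Tl' adjT adjT' α₀ (F.obj X)) ≫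
      adj.counit.app (Tl'.obj (F.obj X))


section Aux

variable {C : Type u₁} [Category.{v₁} C] {D : Type u₂} [Category.{v₂} D]

lemma betaShriek_eq_mate (F : C ⥤ D) (G : D ⥤ C) (adj : F ⊣ G) (T : C ⥤ C) (T' : D ⥤ D)
    (β : G ⋙ T ⟶ T' ⋙ G) (X : C) :
    betaShriek F G adj T T' β X = ((mateEquiv (G := T) (H := T') adj adj).symm β).app X := by
  simp [betaShriek, mateEquiv]

lemma betaShriekOp_eq_conj (F : C ⥤ D) (G : D ⥤ C) (adj : F ⊣ G) (T Tl : C ⥤ C)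
    (T' Tl' : D ⥤ D) (adjT : Tl ⊣ T) (adjT' : Tl' ⊣ T') (β : G ⋙ T ⟶ T' ⋙ G) (X : C) :
    betaShriekOp F G adj T Tl T' Tl' adjT adjT' β X =
      ((conjugateEquiv (adjT.comp adj) (adj.comp adjT')).symm β).app X := by
  change _ = (((conjugateEquiv (adjT.comp adj) (adj.comp adjT')).symm.trans
    (TwoSquare.equivNatTrans F Tl Tl' F).symm) β).app X
  rw [← iterated_mateEquiv_conjugateEquiv_symm adjT adjT' adj adj β]
  simp [betaShriekOp, betaShriek_eq_mate, mateEquiv]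

lemma alphaZeroOp_eq_mate (G : D ⥤ C) (T Tl : C ⥤ C) (T' Tl' : D ⥤ D)
    (adjT : Tl ⊣ T) (adjT' : Tl' ⊣ T') (α₀ : T' ⋙ G ⟶ G ⋙ T) (Y : D) :
    alphaZeroOp G T Tl T' Tl' adjT adjT' α₀ Y =
      ((mateEquiv (G := G) (H := G) adjT' adjT).symm α₀).app Y := by
  simp [alphaZeroOp, mateEquiv]

lemma alphaZeroOpShriek_eq_conj (F : C ⥤ D) (G : D ⥤ C) (adj : F ⊣ G) (T Tl : C ⥤ C)
    (T' Tl' : D ⥤ D) (adjT : Tl ⊣ T) (adjT' : Tl' ⊣ T') (α₀ : T' ⋙ G ⟶ G ⋙ T) (X : C) :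
    alphaZeroOpShriek F G adj T Tl T' Tl' adjT adjT' α₀ X =
      ((conjugateEquiv (adj.comp adjT') (adjT.comp adj)).symm α₀).app X := by
  change _ = (((conjugateEquiv (adj.comp adjT') (adjT.comp adj)).symm.trans
    (TwoSquare.equivNatTrans Tl F F Tl').symm) α₀).app X
  rw [← iterated_mateEquiv_conjugateEquiv_symm adj adj adjT adjT' α₀]
  simp [alphaZeroOpShriek, alphaZeroOp_eq_mate, mateEquiv]

end Aux

/-- If the colax distributive law `β : G ⋙ T ⟶ T' ⋙ G` is invertible with
inverse `α₀`, then the double mates `((β_!)^op)_X` and `((α₀^op)_!)_X` are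
mutually inverse; in particular the double mate `(β_!)^op : T'ℓ ∘ F ⟶ F ∘ Tℓ`
is a natural isomorphism. -/
theorem double_mate_of_strong_is_strong
    (F : C ⥤ D) (G : D ⥤ C) (adj : F ⊣ G) (T Tl : C ⥤ C) (T' Tl' : D ⥤ D)
    (adjT : Tl ⊣ T) (adjT' : Tl' ⊣ T')
    (β : G ⋙ T ⟶ T' ⋙ G) (α₀ : T' ⋙ G ⟶ G ⋙ T)
    (hβα : ∀ Y : D, β.app Y ≫ α₀.app Y = 𝟙 (T.obj (G.obj Y)))
    (hαβ : ∀ Y : D, α₀.app Y ≫ β.app Y = 𝟙 (G.obj (T'.obj Y))) :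
    ∀ X : C,
      betaShriekOp F G adj T Tl T' Tl' adjT adjT' β X ≫
          alphaZeroOpShriek F G adj T Tl T' Tl' adjT adjT' α₀ X =
        𝟙 (Tl'.obj (F.obj X)) ∧
      alphaZeroOpShriek F G adj T Tl T' Tl' adjT adjT' α₀ X ≫
          betaShriekOp F G adj T Tl T' Tl' adjT adjT' β X =
        𝟙 (F.obj (Tl.obj X)) := by
  have hβα' : β ≫ α₀ = 𝟙 (G ⋙ T) := by ext Y; exact hβα Y
  have hαβ' : α₀ ≫ β = 𝟙 (T' ⋙ G) := by ext Y; exact hαβ Y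
  have h1 : (conjugateEquiv (adjT.comp adj) (adj.comp adjT')).symm β ≫
      (conjugateEquiv (adj.comp adjT') (adjT.comp adj)).symm α₀ = 𝟙 _ :=
    conjugateEquiv_symm_comm _ _ hαβ'
  have h2 : (conjugateEquiv (adj.comp adjT') (adjT.comp adj)).symm α₀ ≫
      (conjugateEquiv (adjT.comp adj) (adj.comp adjT')).symm β = 𝟙 _ :=
    conjugateEquiv_symm_comm _ _ hβα'
  intro X
  rw [betaShriekOp_eq_conj, alphaZeroOpShriek_eq_conj]
  constructor
  · rw [← NatTrans.comp_app, h1]; rfl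
  · rw [← NatTrans.comp_app, h2]; rfl


end
end

section
/- Suppose given: (i) morphisms v : P ⟶ T(E) and u : P ⟶ A in 𝒳 forming a pullback square of T(f) : T(E) ⟶ T(A) along z_A : A ⟶ T(A), i.e. T(f) ∘ v = z_A ∘ u and the square is a pullback; (ii) morphisms v' : P' ⟶ T'(F(E)) and u' : P' ⟶ B in 𝒳' forming a pullback square of T'(φ ∘ F(f)) : T'(F(E)) ⟶ T'(B) along z'_B : B ⟶ T'(B). Assume that (a) the naturality square of α at f is a pullback, i.e. the square with sides α_E : F(T(E)) ⟶ T'(F(E)), α_A : F(T(A)) ⟶ T'(F(A)), F(T(f)) and T'(F(f)) is a pullback in 𝒳'; (b) the square with sides z'_{F A} : F(A) ⟶ T'(F(A)), z'_B : B ⟶ T'(B), φ and T'(φ) is a pullback in 𝒳'; (c) F preserves the pullback (i), i.e. the square with sides F(v), F(u), F(T(f)) and F(z_A) is a pullback in 𝒳'. Then there exists a unique morphism θ : F(P) ⟶ P' with v' ∘ θ = α_E ∘ F(v) and u' ∘ θ = φ ∘ F(u), and θ is an isomorphism. -/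
/-!
Pasting the pullback square `F(P)` (hypothesis (c)) with the naturality square of `α` at `f`
and then with the square of `z'` at `φ` exhibits `F(P)`, with legs `α_E ∘ F(v)` and `φ ∘ F(u)`,
as a pullback of the same cospan as `P'`; the comparison map is then the canonical isomorphism
between two pullbacks of one cospan.
-/

open CategoryTheory

universe v₁ v₂ u₁ u₂

namespace CategoryTheory.IsPullback

variable {C : Type u₁} [Category.{v₁} C] {W W' X Y Z : C}
  {fst : W ⟶ X} {snd : W ⟶ Y} {fst' : W' ⟶ X} {snd' : W' ⟶ Y} {f : X ⟶ Z} {g : Y ⟶ Z}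

theorem existsUnique_lift_and_isIso (h : IsPullback fst snd f g) (h' : IsPullback fst' snd' f g) :
    (∃! θ : W ⟶ W', θ ≫ fst' = fst ∧ θ ≫ snd' = snd) ∧
    ∀ θ : W ⟶ W', θ ≫ fst' = fst → θ ≫ snd' = snd → IsIso θ := by
  have eq_iso : ∀ θ : W ⟶ W', θ ≫ fst' = fst → θ ≫ snd' = snd →
      θ = (h.isoIsPullback _ _ h').hom := fun θ h₁ h₂ =>
    h'.hom_ext (by rw [h₁, isoIsPullback_hom_fst]) (by rw [h₂, isoIsPullback_hom_snd])
  refine ⟨⟨_, ⟨isoIsPullback_hom_fst .., isoIsPullback_hom_snd ..⟩,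
    fun θ ⟨h₁, h₂⟩ => eq_iso θ h₁ h₂⟩, fun θ h₁ h₂ => ?_⟩
  rw [eq_iso θ h₁ h₂]
  infer_instance

end CategoryTheory.IsPullback

theorem isPullback_map_comp_app_of_cartesian
    {C : Type u₁} [Category.{v₁} C] {D : Type u₂} [Category.{v₂} D]
    {F : C ⥤ D} {T : C ⥤ C} {T' : D ⥤ D} {α : T ⋙ F ⟶ F ⋙ T'} {z : 𝟭 C ⟶ T} {z' : 𝟭 D ⟶ T'}
    {A E P : C} {B : D} {φ : F.obj A ⟶ B} {f : E ⟶ A} {v : P ⟶ T.obj E} {u : P ⟶ A}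
    (hz : F.map (z.app A) ≫ α.app A = z'.app (F.obj A))
    (ha : IsPullback (α.app E) (F.map (T.map f)) (T'.map (F.map f)) (α.app A))
    (hb : IsPullback (z'.app (F.obj A)) φ (T'.map φ) (z'.app B))
    (hc : IsPullback (F.map v) (F.map u) (F.map (T.map f)) (F.map (z.app A))) :
    IsPullback (F.map v ≫ α.app E) (F.map u ≫ φ) (T'.map (F.map f ≫ φ)) (z'.app B) := by
  have h := (hc.paste_horiz ha).paste_vert (hz ▸ hb)
  rwa [← T'.map_comp] at h

theorem cartesian_comparison_iso_general
    {C : Type u₁} [Category.{v₁} C] {D : Type u₂} [Category.{v₂} D]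
    (F : C ⥤ D) (T : C ⥤ C) (T' : D ⥤ D)
    (α : T ⋙ F ⟶ F ⋙ T') (z : 𝟭 C ⟶ T) (z' : 𝟭 D ⟶ T')
    (hz : ∀ X : C, F.map (z.app X) ≫ α.app X = z'.app (F.obj X))
    (A E : C) (B : D) (φ : F.obj A ⟶ B) (f : E ⟶ A)
    (P : C) (v : P ⟶ T.obj E) (u : P ⟶ A)
    (P' : D) (v' : P' ⟶ T'.obj (F.obj E)) (u' : P' ⟶ B)
    (hP' : IsPullback v' u' (T'.map (F.map f ≫ φ)) (z'.app B))
    (ha : IsPullback (α.app E) (F.map (T.map f)) (T'.map (F.map f)) (α.app A))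
    (hb : IsPullback (z'.app (F.obj A)) φ (T'.map φ) (z'.app B))
    (hc : IsPullback (F.map v) (F.map u) (F.map (T.map f)) (F.map (z.app A))) :
    (∃! θ : F.obj P ⟶ P',
        θ ≫ v' = F.map v ≫ α.app E ∧ θ ≫ u' = F.map u ≫ φ) ∧
    ∀ θ : F.obj P ⟶ P',
      θ ≫ v' = F.map v ≫ α.app E → θ ≫ u' = F.map u ≫ φ → IsIso θ :=
  (isPullback_map_comp_app_of_cartesian (hz A) ha hb hc).existsUnique_lift_and_isIso hP'

/-- For a Cartesian morphism of tangent pairs, the comparison morphism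
`θ : F(P) ⟶ P'` between the vertical tangent pullbacks exists, is unique, and
is an isomorphism. -/
theorem cartesian_comparison_iso
    {C : Type u₁} [Category.{v₁} C] {D : Type u₂} [Category.{v₂} D]
    (F : C ⥤ D) (T : C ⥤ C) (T' : D ⥤ D)
    (α : T ⋙ F ⟶ F ⋙ T') (z : 𝟭 C ⟶ T) (z' : 𝟭 D ⟶ T')
    (hz : ∀ X : C, F.map (z.app X) ≫ α.app X = z'.app (F.obj X))
    (A E : C) (B : D) (φ : F.obj A ⟶ B) (f : E ⟶ A)
    (P : C) (v : P ⟶ T.obj E) (u : P ⟶ A)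
    (hP : IsPullback v u (T.map f) (z.app A))
    (P' : D) (v' : P' ⟶ T'.obj (F.obj E)) (u' : P' ⟶ B)
    (hP' : IsPullback v' u' (T'.map (F.map f ≫ φ)) (z'.app B))
    (ha : IsPullback (α.app E) (F.map (T.map f)) (T'.map (F.map f)) (α.app A))
    (hb : IsPullback (z'.app (F.obj A)) φ (T'.map φ) (z'.app B))
    (hc : IsPullback (F.map v) (F.map u) (F.map (T.map f)) (F.map (z.app A))) :
    (∃! θ : F.obj P ⟶ P',
        θ ≫ v' = F.map v ≫ α.app E ∧ θ ≫ u' = F.map u ≫ φ) ∧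
    ∀ θ : F.obj P ⟶ P',
      θ ≫ v' = F.map v ≫ α.app E → θ ≫ u' = F.map u ≫ φ → IsIso θ :=
  cartesian_comparison_iso_general F T T' α z z' hz A E B φ f P v u P' v' u' hP' ha hb hc
end
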